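/- (Application typing lemma) If Γ ⊨ a₁ : τ → τ' and Γ ⊨ a₂ : τ, then Γ ⊨ a₁ a₂ : τ'. -/
import Mathlib


/-- Terms of the call-by-name λ-calculus with constants and a fixpoint operator. -/
inductive Tm where
  | const : ℕ → Tm
  | var : String → Tm
  | lam : String → Tm → Tm
  | app : Tm → Tm → Tm
  | fix : Tm → Tm
deriving DecidableEq

/-- Substitution of `b` for free occurrences of `x` (capture-avoiding when `b` is closed). -/
def subst (x : String) (b : Tm) : Tm → Tm
  | .const c => .const c
  | .var y => if y = x then b else .var y
  | .lam y a => if y = x then .lam y a else .lam y (subst x b a)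
  | .app a1 a2 => .app (subst x b a1) (subst x b a2)
  | .fix a => .fix (subst x b a)

/-- Free variables. -/
def fv : Tm → Set String
  | .const _ => ∅
  | .var y => {y}
  | .lam y a => fv a \ {y}
  | .app a b => fv a ∪ fv b
  | .fix a => fv a

def Closed (a : Tm) : Prop := fv a = ∅

/-- Call-by-name small-step semantics. -/
inductive Step : Tm → Tm → Prop
  | beta (x : String) (a b : Tm) : Step (.app (.lam x a) b) (subst x b a)
  | app1 {a a' : Tm} (b : Tm) : Step a a' → Step (.app a b) (.app a' b)
  | fix (a : Tm) : Step (.fix a) (.app a (.fix a))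

/-- `Steps j a b` means `a →^j b`. -/
inductive Steps : ℕ → Tm → Tm → Prop
  | refl (a : Tm) : Steps 0 a a
  | head {a b c : Tm} {j : ℕ} : Step a b → Steps j b c → Steps (j + 1) a c

/-- Values: constants and closed λ-abstractions. -/
def IsValue (v : Tm) : Prop :=
  (∃ c, v = .const c) ∨ (∃ x a, v = .lam x a ∧ Closed v)

/-- Irreducible terms. -/
def Irred (a : Tm) : Prop := ¬ ∃ b, Step a b

/-- Semantic types are sets of pairs (index, value). -/
abbrev SemType := Set (ℕ × Tm)

/-- A type contains only values and is closed under decreasing index. -/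
def IsType (τ : SemType) : Prop :=
  (∀ p ∈ τ, IsValue p.2) ∧ ∀ k v j, (k, v) ∈ τ → j ≤ k → (j, v) ∈ τ

/-- `a :ₖ τ`: `a` is closed and whenever `a →^j b` with `b` irreducible and `j < k`,
then `(k - j, b) ∈ τ`. -/
def HasTypeIdx (a : Tm) (k : ℕ) (τ : SemType) : Prop :=
  Closed a ∧ ∀ j b, j < k → Steps j a b → Irred b → (k - j, b) ∈ τ

/-- The semantic function type `τ → τ'`. -/
def Arrow (τ τ' : SemType) : SemType :=
  {p | ∃ x a, p.2 = Tm.lam x a ∧ Closed (Tm.lam x a) ∧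
    ∀ j < p.1, ∀ b, HasTypeIdx b j τ → HasTypeIdx (subst x b a) j τ'}

/-- The semantic type `Nat` of constants. -/
def NatTy : SemType := {p | ∃ c, p.2 = Tm.const c}

/-- `a` is safe for `k` steps. -/
def SafeFor (k : ℕ) (a : Tm) : Prop :=
  ∀ j b, j < k → Steps j a b → IsValue b ∨ ∃ b', Step b b'

/-- `a` is safe. -/
def Safe (a : Tm) : Prop := ∀ k, SafeFor k a

/-- Applying a ground substitution `γ` to a term. -/
def applySubst (γ : String → Option Tm) : Tm → Tm
  | .const c => .const c
  | .var y => (γ y).getD (.var y)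
  | .lam y a => .lam y (applySubst (fun z => if z = y then none else γ z) a)
  | .app a b => .app (applySubst γ a) (applySubst γ b)
  | .fix a => .fix (applySubst γ a)

/-- `γ :ₖ Γ`: same domains, and `γ(x) :ₖ Γ(x)` for all `x`. -/
def EnvOK (γ : String → Option Tm) (Γ : String → Option SemType) (k : ℕ) : Prop :=
  (∀ x, (γ x).isSome ↔ (Γ x).isSome) ∧
  ∀ x t τ, γ x = some t → Γ x = some τ → HasTypeIdx t k τ

/-- A type environment maps variables to (semantic) types. -/
def TyEnvOK (Γ : String → Option SemType) : Prop :=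
  ∀ x τ, Γ x = some τ → IsType τ

/-- `Γ ⊨ a :ₖ τ`. -/
def ModelsIdx (Γ : String → Option SemType) (a : Tm) (k : ℕ) (τ : SemType) : Prop :=
  ∀ γ, EnvOK γ Γ k → HasTypeIdx (applySubst γ a) k τ

/-- `Γ ⊨ a : τ`. -/
def Models (Γ : String → Option SemType) (a : Tm) (τ : SemType) : Prop :=
  ∀ k, ModelsIdx Γ a k τ

/-- Update of a partial map. -/
def upd {α : Type _} (f : String → Option α) (x : String) (v : α) :
    String → Option α := fun y => if y = x then some v else f y

/-- The k-approximation of an indexed set. -/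
def floorTy (τ : SemType) (k : ℕ) : SemType := {p ∈ τ | p.1 < k}

/-- Well founded functionals. -/
def WFF (F : SemType → SemType) : Prop :=
  (∀ τ, IsType τ → IsType (F τ)) ∧
  ∀ τ k, IsType τ → floorTy (F τ) (k + 1) = floorTy (F (floorTy τ k)) (k + 1)

/-- The candidate fixed point `μF`. -/
def muF (F : SemType → SemType) : SemType := {p | p ∈ F^[p.1 + 1] ∅}

lemma hasTypeIdx_mono {a : Tm} {k j : ℕ} {τ : SemType} (hτ : IsType τ)
    (h : HasTypeIdx a k τ) (hj : j ≤ k) : HasTypeIdx a j τ := by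
  obtain ⟨hc, h⟩ := h
  refine ⟨hc, fun j' b hj' hs hir => ?_⟩
  have := h j' b (by omega) hs hir
  exact hτ.2 (k - j') b (j - j') this (by omega)

lemma app_decomp {j : ℕ} {a c b : Tm} (hs : Steps j (.app a c) b) :
    (∃ a', Steps j a a' ∧ b = .app a' c) ∨
    (∃ j₁ x body j₂, Steps j₁ a (.lam x body) ∧ j = j₁ + 1 + j₂ ∧
      Steps j₂ (subst x c body) b) := by
  induction j generalizing a with
  | zero =>
    cases hs
    exact Or.inl ⟨a, Steps.refl a, rfl⟩
  | succ n ih =>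
    cases hs with
    | head hstep hrest =>
      cases hstep with
      | beta x a0 b0 =>
        exact Or.inr ⟨0, x, a0, n, Steps.refl _, by omega, hrest⟩
      | app1 b0 hstep' =>
        rcases ih hrest with ⟨a'', hs'', rfl⟩ | ⟨j₁, x, body, j₂, hs1, hj, hs2⟩
        · exact Or.inl ⟨a'', Steps.head hstep' hs'', rfl⟩
        · exact Or.inr ⟨j₁ + 1, x, body, j₂, Steps.head hstep' hs1, by omega, hs2⟩

theorem application_typing (Γ : String → Option SemType) (a₁ a₂ : Tm) (τ τ' : SemType)
    (hΓ : TyEnvOK Γ) (hτ : IsType τ) (hτ' : IsType τ')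
    (h₁ : Models Γ a₁ (Arrow τ τ')) (h₂ : Models Γ a₂ τ) :
    Models Γ (Tm.app a₁ a₂) τ' := by
  intro k γ hγ
  have H1 := h₁ k γ hγ
  have H2 := h₂ k γ hγ
  have hA : applySubst γ (Tm.app a₁ a₂) = Tm.app (applySubst γ a₁) (applySubst γ a₂) := rfl
  set A₁ := applySubst γ a₁ with hA1
  set A₂ := applySubst γ a₂ with hA2
  rw [hA]
  constructor
  · show fv (Tm.app A₁ A₂) = ∅
    have c1 := H1.1; have c2 := H2.1
    simp only [Closed] at c1 c2
    simp [fv, c1, c2]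
  · intro j b hj hs hir
    rcases app_decomp hs with ⟨a', hs', rfl⟩ | ⟨j₁, x, body, j₂, hs1, hjeq, hs2⟩
    · -- a' must be irreducible, hence a lam by Arrow typing, contradiction with Irred
      have hair : Irred a' := by
        intro ⟨b', hb'⟩
        exact hir ⟨_, Step.app1 A₂ hb'⟩
      have hm := H1.2 j a' hj hs' hair
      obtain ⟨x, a0, heq, -, -⟩ := hm
      simp only at heq
      exact absurd ⟨_, heq ▸ Step.beta x a0 A₂⟩ hir
    · have hj1 : j₁ < k := by omega
      have hm := H1.2 j₁ (.lam x body) hj1 hs1 (by rintro ⟨b', hb'⟩; cases hb')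
      obtain ⟨x', a0, heq, hcl, harr⟩ := hm
      simp only [Tm.lam.injEq] at heq
      obtain ⟨rfl, rfl⟩ := heq
      have hA2ty : HasTypeIdx A₂ (k - j₁ - 1) τ :=
        hasTypeIdx_mono hτ H2 (by omega)
      have hsub := harr (k - j₁ - 1) (by omega) A₂ hA2ty
      have := hsub.2 j₂ b (by omega) hs2 hir
      have harith : k - j₁ - 1 - j₂ = k - j := by omega
      rwa [harith] at this
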